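/- arXiv:1808.00844 — 3 statements merged into one kernel-verified Lean document; each statement's English description precedes it below -/
import Mathlib

section
/- Let p be a prime, d ≥ 1, and x_1,…,x_d ∈ F_p(x) with x_1,…,x_d ∉ F_p and x_1−1,…,x_d−1 ∉ F_p. Then f(x_1−1,…,x_d−1) − f(x_1,…,x_d) = (1/(x_1−1))·f(x_2−1,…,x_d−1) − (1/x_d)·f(x_1,…,x_{d−1}). -/
/-- `f(x₁, …, x_d) = ∑_{0 < n₁ < ⋯ < n_d < p} 1/((n₁ - x₁) ⋯ (n_d - x_d))` in the rational
function field `𝔽_p(x)`, for a list of arguments `xs = [x₁, …, x_d]`; `f [] = 1`. -/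
noncomputable def f (p : ℕ) [Fact p.Prime] (xs : List (RatFunc (ZMod p))) :
    RatFunc (ZMod p) :=
  ∑ n ∈ Finset.univ.filter
      (fun n : Fin xs.length → Fin p =>
        (∀ i j : Fin xs.length, i < j → n i < n j) ∧ ∀ i, (n i : ℕ) ≠ 0),
    ∏ i, (((n i : ℕ) : RatFunc (ZMod p)) - xs.get i)⁻¹

/-!
Write `S(y; A)` (`multipleHarmonicSum y A`) for the sum of `∏ᵢ 1/(nᵢ - yᵢ)` over strictly
increasing tuples `n` with entries in `A`, so that `f(x) = S(x; {1, …, p-1})`. Replacing every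
`xᵢ` by `xᵢ - 1` amounts to shifting the range to `{2, …, p}`; the tuples ending in `p`
contribute `-x_d⁻¹ S(x₁, …, x_{d-1}; {2, …, p-1})` because `p = 0` in characteristic `p`.
Dually, the tuples of `f(x)` starting with `1` contribute `(1 - x₁)⁻¹ S(x₂, …, x_d; {2, …, p-1})`.
Expanding both sides of the identity in this way leaves only sums over `{2, …, p-1}`, and these
cancel.
-/

open Finset

def strictMonoTuples (d : ℕ) (A : Finset ℕ) : Finset (Fin d → ℕ) :=
  {n ∈ Fintype.piFinset fun _ => A | StrictMono n}

lemma Fin.strictMono_snoc {α : Type*} [Preorder α] {d : ℕ} {t : Fin d → α} {a : α} :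
    StrictMono (Fin.snoc t a : Fin (d + 1) → α) ↔ (∀ i, t i < a) ∧ StrictMono t := by
  rw [← Fin.insertNth_last', Fin.strictMono_insertNth_iff]
  simp [Fin.castSucc_lt_last, and_comm]

section
variable {d : ℕ} {A : Finset ℕ}

@[simp]
lemma mem_strictMonoTuples {n : Fin d → ℕ} :
    n ∈ strictMonoTuples d A ↔ (∀ i, n i ∈ A) ∧ StrictMono n := by
  simp [strictMonoTuples]

lemma strictMonoTuples_insert_of_forall_lt {m : ℕ} (hm : ∀ a ∈ A, m < a) :
    strictMonoTuples (d + 1) (insert m A) =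
      strictMonoTuples (d + 1) A ∪ (strictMonoTuples d A).image (Fin.cons m) := by
  ext n
  induction n using Fin.consCases with
  | cons a t =>
  simp only [mem_union, mem_image, mem_strictMonoTuples, Fin.forall_fin_succ, Fin.cons_zero,
    Fin.cons_succ, mem_insert, Fin.strictMono_cons, Fin.cons_inj]
  constructor
  · rintro ⟨⟨ha, ht⟩, hat, ht_mono⟩
    have ht_mem : ∀ i, t i ∈ A := by
      refine fun i => (ht i).resolve_left fun hti => ?_
      have := hat i
      rcases ha with rfl | ha
      · omega
      · have := hm a ha
        omega
    rcases ha with rfl | ha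
    · exact Or.inr ⟨t, ⟨ht_mem, ht_mono⟩, rfl, rfl⟩
    · exact Or.inl ⟨⟨ha, ht_mem⟩, hat, ht_mono⟩
  · rintro (⟨⟨ha, ht⟩, hat, ht_mono⟩ | ⟨t, ⟨ht, ht_mono⟩, rfl, rfl⟩)
    · exact ⟨⟨Or.inr ha, fun i => Or.inr (ht i)⟩, hat, ht_mono⟩
    · exact ⟨⟨Or.inl rfl, fun i => Or.inr (ht i)⟩, fun i => hm _ (ht i), ht_mono⟩

lemma strictMonoTuples_insert_of_forall_gt {M : ℕ} (hM : ∀ a ∈ A, a < M) :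
    strictMonoTuples (d + 1) (insert M A) =
      strictMonoTuples (d + 1) A ∪ (strictMonoTuples d A).image (Fin.snoc · M) := by
  ext n
  induction n using Fin.snocCases with
  | snoc t a =>
  simp only [mem_union, mem_image, mem_strictMonoTuples, Fin.forall_fin_succ', Fin.snoc_last,
    Fin.snoc_castSucc, mem_insert, Fin.strictMono_snoc, Fin.snoc_inj]
  constructor
  · rintro ⟨⟨ht, ha⟩, hta, ht_mono⟩
    have ht_mem : ∀ i, t i ∈ A := by
      refine fun i => (ht i).resolve_left fun hti => ?_
      have := hta i
      rcases ha with rfl | ha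
      · omega
      · have := hM a ha
        omega
    rcases ha with rfl | ha
    · exact Or.inr ⟨t, ⟨ht_mem, ht_mono⟩, rfl, rfl⟩
    · exact Or.inl ⟨⟨ht_mem, ha⟩, hta, ht_mono⟩
  · rintro (⟨⟨ht, ha⟩, hta, ht_mono⟩ | ⟨t, ⟨ht, ht_mono⟩, rfl, rfl⟩)
    · exact ⟨⟨fun i => Or.inr (ht i), Or.inr ha⟩, hta, ht_mono⟩
    · exact ⟨⟨fun i => Or.inr (ht i), Or.inl rfl⟩, fun i => hM _ (ht i), ht_mono⟩

lemma strictMonoTuples_image {g : ℕ → ℕ} (hg : StrictMono g) :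
    strictMonoTuples d (A.image g) = (strictMonoTuples d A).image (g ∘ ·) := by
  ext n
  simp only [mem_strictMonoTuples, mem_image]
  constructor
  · rintro ⟨hn, hmono⟩
    choose m hmA hm using hn
    refine ⟨m, ⟨hmA, fun i j hij => ?_⟩, funext hm⟩
    rw [← hg.lt_iff_lt, hm, hm]
    exact hmono hij
  · rintro ⟨m, ⟨hmA, hmono⟩, rfl⟩
    exact ⟨fun i => ⟨m i, hmA i, rfl⟩, hg.comp hmono⟩

end

section

variable {K : Type*} [Field K] {d : ℕ}

noncomputable def multipleHarmonicSum (y : Fin d → K) (A : Finset ℕ) : K :=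
  ∑ n ∈ strictMonoTuples d A, ∏ i, ((n i : K) - y i)⁻¹

lemma multipleHarmonicSum_fin_zero (y : Fin 0 → K) (A : Finset ℕ) :
    multipleHarmonicSum y A = 1 := by
  simp [multipleHarmonicSum, strictMonoTuples, Subsingleton.strictMono]

lemma multipleHarmonicSum_comp_cast {d' : ℕ} (h : d' = d) (y : Fin d → K) (A : Finset ℕ) :
    multipleHarmonicSum (y ∘ Fin.cast h) A = multipleHarmonicSum y A := by
  subst h
  rfl

lemma multipleHarmonicSum_sub_one (y : Fin d → K) (A : Finset ℕ) :
    multipleHarmonicSum (fun i => y i - 1) A = multipleHarmonicSum y (A.image (· + 1)) := by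
  have hsucc : StrictMono (· + 1 : ℕ → ℕ) := add_left_strictMono
  rw [multipleHarmonicSum, multipleHarmonicSum, strictMonoTuples_image hsucc,
    sum_image hsucc.injective.comp_left.injOn]
  refine sum_congr rfl fun n _ => prod_congr rfl fun i _ => ?_
  simp only [Function.comp_apply, Nat.cast_succ, sub_sub_eq_add_sub]

lemma multipleHarmonicSum_insert_of_forall_lt (y : Fin (d + 1) → K) {A : Finset ℕ} {m : ℕ}
    (hm : ∀ a ∈ A, m < a) :
    multipleHarmonicSum y (insert m A) =
      multipleHarmonicSum y A + ((m : K) - y 0)⁻¹ * multipleHarmonicSum (Fin.tail y) A := by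
  have hdisj :
      Disjoint (strictMonoTuples (d + 1) A) ((strictMonoTuples d A).image (Fin.cons m)) := by
    refine disjoint_left.2 fun n hn hn' => ?_
    obtain ⟨t, -, rfl⟩ := mem_image.1 hn'
    exact (hm m ((mem_strictMonoTuples.1 hn).1 0)).false
  rw [multipleHarmonicSum, strictMonoTuples_insert_of_forall_lt hm, sum_union hdisj,
    sum_image (Fin.cons_right_injective (α := fun _ => ℕ) m).injOn]
  simp [Fin.prod_univ_succ, multipleHarmonicSum, Fin.tail, mul_sum, mul_comm]

lemma multipleHarmonicSum_insert_of_forall_gt (y : Fin (d + 1) → K) {A : Finset ℕ} {M : ℕ}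
    (hM : ∀ a ∈ A, a < M) :
    multipleHarmonicSum y (insert M A) =
      multipleHarmonicSum y A +
        ((M : K) - y (Fin.last d))⁻¹ * multipleHarmonicSum (Fin.init y) A := by
  have hdisj :
      Disjoint (strictMonoTuples (d + 1) A) ((strictMonoTuples d A).image (Fin.snoc · M)) := by
    refine disjoint_left.2 fun n hn hn' => ?_
    obtain ⟨t, -, rfl⟩ := mem_image.1 hn'
    exact (hM M (by simpa using (mem_strictMonoTuples.1 hn).1 (Fin.last d))).false
  rw [multipleHarmonicSum, strictMonoTuples_insert_of_forall_gt hM, sum_union hdisj,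
    sum_image fun _ _ _ _ h => (Fin.snoc_injective2 h).1]
  simp [Fin.prod_univ_castSucc, multipleHarmonicSum, Fin.init, mul_sum, mul_comm]

variable {p : ℕ}

lemma multipleHarmonicSum_Ioo_zero (hp : 1 < p) (y : Fin (d + 1) → K) :
    multipleHarmonicSum y (Ioo 0 p) =
      multipleHarmonicSum y (Ioo 1 p) -
        (y 0 - 1)⁻¹ * multipleHarmonicSum (Fin.tail y) (Ioo 1 p) := by
  rw [← Ico_add_one_left_eq_Ioo, zero_add, ← Ioo_insert_left hp,
    multipleHarmonicSum_insert_of_forall_lt y fun a ha => (mem_Ioo.1 ha).1, Nat.cast_one,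
    ← neg_sub, inv_neg]
  ring

variable [CharP K p]

lemma multipleHarmonicSum_sub_one_Ioo (hp : 1 < p) (y : Fin (d + 1) → K) :
    multipleHarmonicSum (fun i => y i - 1) (Ioo 0 p) =
      multipleHarmonicSum y (Ioo 1 p) -
        (y (Fin.last d))⁻¹ * multipleHarmonicSum (Fin.init y) (Ioo 1 p) := by
  rw [multipleHarmonicSum_sub_one, image_add_right_Ioo, zero_add, Ioo_add_one_right_eq_Ioc,
    ← Ioo_insert_right hp, multipleHarmonicSum_insert_of_forall_gt y fun a ha => (mem_Ioo.1 ha).2,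
    CharP.cast_eq_zero, zero_sub, inv_neg]
  ring

theorem multipleHarmonicSum_sub_one_sub (hp : 1 < p) (y : Fin (d + 1) → K) :
    multipleHarmonicSum (fun i => y i - 1) (Ioo 0 p) - multipleHarmonicSum y (Ioo 0 p) =
      (y 0 - 1)⁻¹ * multipleHarmonicSum (fun i => Fin.tail y i - 1) (Ioo 0 p) -
        (y (Fin.last d))⁻¹ * multipleHarmonicSum (Fin.init y) (Ioo 0 p) := by
  rw [multipleHarmonicSum_sub_one_Ioo hp, multipleHarmonicSum_Ioo_zero hp]
  cases d with
  | zero =>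
    simp only [multipleHarmonicSum_fin_zero]
    ring
  | succ e =>
    rw [multipleHarmonicSum_sub_one_Ioo hp, multipleHarmonicSum_Ioo_zero hp,
      Fin.tail_init_eq_init_tail]
    simp only [Fin.tail, Fin.init, Fin.succ_last, Fin.castSucc_zero]
    ring

end

lemma f_eq_multipleHarmonicSum (p : ℕ) [Fact p.Prime] (xs : List (RatFunc (ZMod p))) :
    f p xs = multipleHarmonicSum xs.get (Ioo 0 p) := by
  refine sum_bij' (fun n _ i => (n i : ℕ))
    (fun m hm i => ⟨m i, (mem_Ioo.1 ((mem_strictMonoTuples.1 hm).1 i)).2⟩) ?_ ?_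
    (fun _ _ => rfl) (fun _ _ => rfl) (fun _ _ => rfl)
  · intro n hn
    simp only [mem_filter, mem_univ, true_and] at hn
    exact mem_strictMonoTuples.2
      ⟨fun i => mem_Ioo.2 ⟨Nat.pos_of_ne_zero (hn.2 i), (n i).isLt⟩, hn.1⟩
  · intro m hm
    obtain ⟨hmem, hmono⟩ := mem_strictMonoTuples.1 hm
    simp only [mem_filter, mem_univ, true_and]
    exact ⟨fun i j hij => Fin.mk_lt_mk.2 (hmono hij), fun i => (mem_Ioo.1 (hmem i)).1.ne'⟩

lemma f_ofFn (p : ℕ) [Fact p.Prime] {d : ℕ} (y : Fin d → RatFunc (ZMod p)) :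
    f p (List.ofFn y) = multipleHarmonicSum y (Ioo 0 p) := by
  rw [f_eq_multipleHarmonicSum, show (List.ofFn y).get = y ∘ Fin.cast List.length_ofFn from
    funext (List.get_ofFn y), multipleHarmonicSum_comp_cast]

theorem f_translation_identity_general (p : ℕ) [Fact p.Prime]
    (xs : List (RatFunc (ZMod p))) (hne : xs ≠ []) :
    f p (xs.map (· - 1)) - f p xs
      = (xs.headD 0 - 1)⁻¹ * f p (xs.tail.map (· - 1))
        - (xs.getLastD 0)⁻¹ * f p xs.dropLast := by
  obtain ⟨d, y, rfl⟩ :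
      ∃ (d : ℕ) (y : Fin (d + 1) → RatFunc (ZMod p)), xs = List.ofFn y := by
    obtain ⟨x, t, rfl⟩ := List.exists_cons_of_ne_nil hne
    exact ⟨t.length, (x :: t).get, (List.ofFn_get _).symm⟩
  have hhead : (List.ofFn y).headD 0 = y 0 := by rw [List.ofFn_succ]; rfl
  have htail : (List.ofFn y).tail = List.ofFn (Fin.tail y) := by rw [List.ofFn_succ]; rfl
  have hlast : (List.ofFn y).getLastD 0 = y (Fin.last d) := by
    rw [List.ofFn_succ', List.concat_eq_append, List.getLastD_concat]
  have hinit : (List.ofFn y).dropLast = List.ofFn (Fin.init y) := by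
    rw [List.ofFn_succ', List.concat_eq_append, List.dropLast_concat]; rfl
  rw [hhead, hlast, htail, hinit, List.map_ofFn, List.map_ofFn, f_ofFn, f_ofFn, f_ofFn, f_ofFn]
  exact multipleHarmonicSum_sub_one_sub (Fact.out : p.Prime).one_lt y

/-- For a prime `p`, `d ≥ 1` and `x₁, …, x_d ∈ 𝔽_p(x)` with all `xᵢ ∉ 𝔽_p` and all
`xᵢ - 1 ∉ 𝔽_p`, one has
`f(x₁-1,…,x_d-1) - f(x₁,…,x_d) = (x₁-1)⁻¹ f(x₂-1,…,x_d-1) - x_d⁻¹ f(x₁,…,x_{d-1})`. -/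
theorem f_translation_identity (p : ℕ) [Fact p.Prime]
    (xs : List (RatFunc (ZMod p))) (hne : xs ≠ [])
    (h1 : ∀ y ∈ xs, ∀ c : ZMod p, y ≠ RatFunc.C c)
    (h2 : ∀ y ∈ xs, ∀ c : ZMod p, y - 1 ≠ RatFunc.C c) :
    f p (xs.map (· - 1)) - f p xs
      = (xs.headD 0 - 1)⁻¹ * f p (xs.tail.map (· - 1))
        - (xs.getLastD 0)⁻¹ * f p xs.dropLast :=
  f_translation_identity_general p xs hne
end

section
/- Let p be a prime, d ≥ 1, 1 ≤ i ≤ d, and x_0, x_1, …, x_{d+1} ∈ F_p(x) with x_0,…,x_{d+1} ∉ F_p, x_i − 1 ∉ F_p, x_i − x_{i−1} ≠ 1, and x_i ≠ x_{i+1}. Then f̃(x_0,…,x_{i−1}, x_i−1, x_{i+1},…,x_{d+1}) − f̃(x_0,…,x_{d+1}) = (1/(x_i−x_{i−1}−1))·( f̃(x_0,…,x_{i−1}, x_{i+1},…,x_{d+1}) − f̃(x_0,…,x_{i−2}, x_i−1, x_{i+1},…,x_{d+1}) ) + (1/(x_i−x_{i+1}))·( f̃(x_0,…,x_i, x_{i+2},…,x_{d+1})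 − f̃(x_0,…,x_{i−1}, x_{i+1},…,x_{d+1}) ). -/
/-- `f̃(x₀, x₁, …, x_d, x_{d+1}) = (x₀ x_{d+1})⁻¹ f(x₁, …, x_d)`, applied to the list
`[x₀, x₁, …, x_d, x_{d+1}]`. -/
noncomputable def ft (p : ℕ) [Fact p.Prime] (xs : List (RatFunc (ZMod p))) :
    RatFunc (ZMod p) :=
  (xs.headD 0 * xs.getLastD 0)⁻¹ * f p (xs.drop 1).dropLast

/-!
Because `p = 0` in `𝔽_p(x)`, `(x₀ x_{d+1})⁻¹ = (0 - x₀)⁻¹ (p - x_{d+1})⁻¹`, so `f̃(x₀, …, x_{d+1})`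
is the sum of `∏ⱼ (nⱼ - xⱼ)⁻¹` over the chains `0 = n₀ < n₁ < ⋯ < n_{d+1} = p`. As
`(n - (xᵢ - 1))⁻¹ = (n + 1 - xᵢ)⁻¹`, the sum over `nᵢ` of the difference on the left telescopes to
`(n_{i+1} - xᵢ)⁻¹ - (n_{i-1} + 1 - xᵢ)⁻¹`, and the partial fraction decompositions
`(n - a)⁻¹ (n - b)⁻¹ = (a - b)⁻¹ ((n - a)⁻¹ - (n - b)⁻¹)` at `n = n_{i+1}` and at `n = n_{i-1}` turn
the two terms into the four chain sums on the right. This works over any field and for chains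
in any interval `[a, b]` of `ℕ`.
-/

open Finset

variable {K : Type*} [Field K]

/-- The sum of `∏ⱼ (nⱼ - zⱼ)⁻¹` over the chains `a < n₁ < ⋯ < n_r = b`, where `zs = [z₁, …, z_r]`. -/
def chainSum : List K → ℕ → ℕ → K
  | [], a, b => if a = b then 1 else 0
  | z :: zs, a, b => ∑ n ∈ Ioc a b, ((n : K) - z)⁻¹ * chainSum zs n b

/-- The sum of `∏ⱼ (nⱼ - zⱼ)⁻¹` over the chains `a = n₀ < n₁ < ⋯ < n_r = b`, where
`zs = [z₀, …, z_r]`. -/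
def closedChainSum : List K → ℕ → ℕ → K
  | [], _, _ => 0
  | z :: zs, a, b => ((a : K) - z)⁻¹ * chainSum zs a b

theorem chainSum_eq_zero_of_lt : ∀ (zs : List K) {a b : ℕ}, b < a → chainSum zs a b = 0
  | [], _, _, h => if_neg h.ne'
  | _ :: _, _, _, h => by simp [chainSum, Ioc_eq_empty_of_le h.le]

theorem chainSum_append (xs ys : List K) (a b : ℕ) :
    chainSum (xs ++ ys) a b = ∑ m ∈ Icc a b, chainSum xs a m * chainSum ys m b := by
  induction xs generalizing a with
  | nil =>
    simp only [List.nil_append, chainSum, ite_mul, one_mul, zero_mul, sum_ite_eq, mem_Icc,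
      le_refl, true_and]
    split_ifs with h
    · rfl
    · exact chainSum_eq_zero_of_lt ys (not_le.mp h)
  | cons x xs ih =>
    simp only [List.cons_append, chainSum, ih, mul_sum, sum_mul, mul_assoc]
    exact sum_comm' fun n m => by simp only [mem_Ioc, mem_Icc]; omega

theorem chainSum_singleton (z : K) (a b : ℕ) :
    chainSum [z] a b = if a < b then ((b : K) - z)⁻¹ else 0 := by
  simp [chainSum]

theorem chainSum_append_singleton (xs : List K) (z : K) (a b : ℕ) :
    chainSum (xs ++ [z]) a b = (∑ m ∈ Ico a b, chainSum xs a m) * ((b : K) - z)⁻¹ := by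
  rw [chainSum_append, sum_mul]
  simp only [chainSum_singleton, mul_ite, mul_zero]
  rw [← sum_filter]
  congr 1
  ext m
  simp only [mem_filter, mem_Icc, mem_Ico]
  omega

theorem closedChainSum_append {xs : List K} (hxs : xs ≠ []) (ys : List K) (a b : ℕ) :
    closedChainSum (xs ++ ys) a b = ∑ m ∈ Icc a b, closedChainSum xs a m * chainSum ys m b := by
  obtain ⟨x, xs, rfl⟩ := List.exists_cons_of_ne_nil hxs
  simp only [List.cons_append, closedChainSum, chainSum_append, mul_sum, mul_assoc]

theorem exists_closedChainSum_append_singleton (xs : List K) (a : ℕ) :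
    ∃ q : ℕ → K, ∀ (z : K) (m : ℕ), closedChainSum (xs ++ [z]) a m = q m * ((m : K) - z)⁻¹ := by
  cases xs with
  | nil =>
    refine ⟨fun m => if a = m then 1 else 0, fun z m => ?_⟩
    by_cases h : a = m <;> simp [closedChainSum, chainSum, h]
  | cons x xs =>
    exact ⟨fun m => ((a : K) - x)⁻¹ * ∑ j ∈ Ico a m, chainSum xs a j, fun z m => by
      simp only [List.cons_append, closedChainSum, chainSum_append_singleton, mul_assoc]⟩

theorem inv_mul_inv_eq_inv_sub_mul_inv_sub_inv {a b : K} (ha : a ≠ 0) (hb : b ≠ 0)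
    (hab : a ≠ b) : a⁻¹ * b⁻¹ = (b - a)⁻¹ * (a⁻¹ - b⁻¹) := by
  rw [inv_sub_inv ha hb, div_eq_mul_inv, ← mul_assoc, inv_mul_cancel₀ (sub_ne_zero.mpr hab.symm),
    one_mul, mul_inv]

theorem sum_Ioo_inv_sub_sub_one_sub_inv_sub (y : K) {m k : ℕ} (hmk : m < k) :
    ∑ n ∈ Ioo m k, (((n : K) - (y - 1))⁻¹ - ((n : K) - y)⁻¹)
      = ((k : K) - y)⁻¹ - ((m : K) - (y - 1))⁻¹ := by
  have hshift : ∀ n : ℕ, (n : K) - (y - 1) = ((n + 1 : ℕ) : K) - y := fun n => by push_cast; ring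
  simp only [hshift]
  rw [← Ico_add_one_left_eq_Ioo]
  exact sum_Ico_sub (fun n : ℕ => ((n : K) - y)⁻¹) hmk

theorem chainSum_sub_one_cons_sub (y w : K) (zs : List K) (m b : ℕ)
    (hy : ∀ n : ℕ, (n : K) ≠ y) (hw : ∀ n : ℕ, (n : K) ≠ w) (hyw : y ≠ w) :
    chainSum ((y - 1) :: w :: zs) m b - chainSum (y :: w :: zs) m b
      = (y - w)⁻¹ * (chainSum (y :: zs) m b - chainSum (w :: zs) m b)
        - ((m : K) - (y - 1))⁻¹ * chainSum (w :: zs) m b := by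
  have htelescope : chainSum ((y - 1) :: w :: zs) m b - chainSum (y :: w :: zs) m b
      = ∑ k ∈ Ioc m b, (((k : K) - y)⁻¹ - ((m : K) - (y - 1))⁻¹)
          * (((k : K) - w)⁻¹ * chainSum zs k b) := by
    simp only [chainSum, ← sum_sub_distrib, ← sub_mul, mul_sum]
    rw [sum_comm' (t' := Ioc m b) (s' := fun k => Ioo m k)
      fun n k => by simp only [mem_Ioc, mem_Ioo]; omega]
    refine sum_congr rfl fun k hk => ?_
    rw [← sum_mul, sum_Ioo_inv_sub_sub_one_sub_inv_sub y (mem_Ioc.mp hk).1]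
  rw [htelescope]
  simp only [chainSum, mul_sum, ← sum_sub_distrib]
  refine sum_congr rfl fun k _ => ?_
  have hpf := inv_mul_inv_eq_inv_sub_mul_inv_sub_inv (sub_ne_zero.mpr (hy k))
    (sub_ne_zero.mpr (hw k)) (fun h => hyw (by simpa using h))
  rw [sub_sub_sub_cancel_left] at hpf
  linear_combination chainSum zs k b * hpf

theorem closedChainSum_sub_one_sub (xs zs : List K) (u y w : K) (a b : ℕ)
    (hu : ∀ n : ℕ, (n : K) ≠ u) (hy : ∀ n : ℕ, (n : K) ≠ y) (hy1 : ∀ n : ℕ, (n : K) ≠ y - 1)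
    (hw : ∀ n : ℕ, (n : K) ≠ w) (hyu : y - u ≠ 1) (hyw : y ≠ w) :
    closedChainSum (xs ++ u :: (y - 1) :: w :: zs) a b
        - closedChainSum (xs ++ u :: y :: w :: zs) a b
      = (y - u - 1)⁻¹ * (closedChainSum (xs ++ u :: w :: zs) a b
          - closedChainSum (xs ++ (y - 1) :: w :: zs) a b)
        + (y - w)⁻¹ * (closedChainSum (xs ++ u :: y :: zs) a b
          - closedChainSum (xs ++ u :: w :: zs) a b) := by
  obtain ⟨q, hq⟩ := exists_closedChainSum_append_singleton xs a
  have hsplit : ∀ (z : K) (ys : List K), closedChainSum (xs ++ z :: ys) a b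
      = ∑ m ∈ Icc a b, q m * ((m : K) - z)⁻¹ * chainSum ys m b := fun z ys => by
    rw [← List.singleton_append, ← List.append_assoc, closedChainSum_append (by simp)]
    simp only [hq]
  simp only [hsplit, ← sum_sub_distrib, mul_sum, ← sum_add_distrib]
  refine sum_congr rfl fun m _ => ?_
  have hright := chainSum_sub_one_cons_sub y w zs m b hy hw hyw
  have hleft := inv_mul_inv_eq_inv_sub_mul_inv_sub_inv (sub_ne_zero.mpr (hu m))
    (sub_ne_zero.mpr (hy1 m)) (fun h => hyu (by linear_combination h))
  have hsign : (u - (y - 1))⁻¹ = -(y - u - 1)⁻¹ := by rw [← inv_neg]; ring_nf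
  rw [sub_sub_sub_cancel_left, hsign] at hleft
  linear_combination q m * ((m : K) - u)⁻¹ * hright - q m * chainSum (w :: zs) m b * hleft

theorem sum_strictMono_prod_inv_eq_sum_chainSum (p : ℕ) {r : ℕ} (z : Fin r → K) {a : ℕ}
    (ha : a < p) :
    ∑ n ∈ univ.filter (fun n : Fin r → Fin p => StrictMono n ∧ ∀ i, a < (n i : ℕ)),
        ∏ i, (((n i : ℕ) : K) - z i)⁻¹
      = ∑ m ∈ Ico a p, chainSum (List.ofFn z) a m := by
  induction r generalizing a with
  | zero => simp [chainSum, ha, StrictMono]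
  | succ r ih =>
    have hcons : ∀ (n₀ : Fin p) (t : Fin r → Fin p),
        (StrictMono (Fin.cons n₀ t : Fin (r + 1) → Fin p)
          ∧ ∀ i, a < ((Fin.cons n₀ t : Fin (r + 1) → Fin p) i : ℕ))
        ↔ a < n₀ ∧ (StrictMono t ∧ ∀ i, (n₀ : ℕ) < t i) := fun n₀ t => by
      simp only [Fin.strictMono_cons, Fin.forall_fin_succ, Fin.cons_zero, Fin.cons_succ, Fin.lt_def]
      constructor
      · rintro ⟨⟨hlt, hmono⟩, ha, -⟩
        exact ⟨ha, hmono, hlt⟩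
      · rintro ⟨ha, hmono, hlt⟩
        exact ⟨⟨hlt, hmono⟩, ha, fun i => ha.trans (hlt i)⟩
    rw [sum_filter, ← (Fin.consEquiv fun _ => Fin p).sum_comp, Fintype.sum_prod_type]
    simp only [Fin.consEquiv, Equiv.coe_fn_mk, hcons, Fin.prod_univ_succ, Fin.cons_zero,
      Fin.cons_succ, ite_and, sum_ite_irrel, sum_const_zero, ← mul_ite_zero, ← mul_sum, ← sum_filter,
      filter_filter]
    simp only [fun n₀ : Fin p => ih (fun i => z i.succ) n₀.isLt]
    rw [Fin.sum_univ_eq_sum_range (fun n => ((n : K) - z 0)⁻¹ * if a < n then ∑ m ∈ Ico n p,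
      chainSum (List.ofFn fun i => z i.succ) n m else 0)]
    simp only [mul_ite, mul_zero, ← sum_filter, List.ofFn_succ, chainSum, mul_sum]
    exact sum_comm' fun n m => by simp only [mem_filter, mem_range, mem_Ico, mem_Ioc]; omega

theorem f_eq_sum_chainSum (p : ℕ) [Fact p.Prime] (xs : List (RatFunc (ZMod p))) :
    f p xs = ∑ m ∈ Ico 0 p, chainSum xs 0 m := by
  have h := sum_strictMono_prod_inv_eq_sum_chainSum p xs.get (Fact.out : p.Prime).pos
  rw [List.ofFn_get] at h
  rw [← h, f]
  simp only [StrictMono, Nat.pos_iff_ne_zero]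

theorem ft_eq_closedChainSum (p : ℕ) [Fact p.Prime] (xs : List (RatFunc (ZMod p)))
    (hxs : 2 ≤ xs.length) : ft p xs = closedChainSum xs 0 p := by
  obtain ⟨x, zs, z, rfl⟩ : ∃ x zs z, xs = x :: (zs ++ [z]) := by
    rcases xs with _ | ⟨x, ys⟩
    · simp at hxs
    · have hys : ys ≠ [] := List.ne_nil_of_length_pos (by simp at hxs; omega)
      exact ⟨x, _, _, by rw [List.dropLast_append_getLast hys]⟩
  have hp : ((p : ℕ) : RatFunc (ZMod p)) = 0 := by
    rw [← map_natCast (RatFunc.C (K := ZMod p)), ZMod.natCast_self, map_zero]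
  have hlast : (x :: (zs ++ [z])).getLastD 0 = z := by
    rw [← List.cons_append, List.getLastD_concat]
  rw [ft, List.headD_cons, hlast, List.drop_one, List.tail_cons, List.dropLast_concat,
    closedChainSum, chainSum_append_singleton, f_eq_sum_chainSum, hp, Nat.cast_zero, zero_sub,
    zero_sub, inv_neg, inv_neg, mul_inv]
  ring

theorem natCast_ne_of_forall_ne_C {F : Type*} [Field F] {z : RatFunc F}
    (hz : ∀ c : F, z ≠ RatFunc.C c) (n : ℕ) : (n : RatFunc F) ≠ z :=
  fun h => hz n (by rw [← h, map_natCast])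

/-- Difference equation for `f̃` (Lemma for one translated argument): writing the argument
tuple `(x₀, …, x_{d+1})` with `1 ≤ i ≤ d` as `x₀ :: as ++ [y] ++ bs` where
`as = [x₁, …, x_{i-1}]`, `y = xᵢ` and `bs = [x_{i+1}, …, x_{d+1}]` (so `bs ≠ []`), and with
`x_{i-1} = (x₀ :: as).getLastD 0` and `x_{i+1} = bs.headD 0`, one has
`f̃(x₀,…,xᵢ-1,…,x_{d+1}) - f̃(x₀,…,x_{d+1})
 = (xᵢ-x_{i-1}-1)⁻¹ (f̃(x₀,…,x_{i-1},x_{i+1},…,x_{d+1}) - f̃(x₀,…,x_{i-2},xᵢ-1,x_{i+1},…,x_{d+1}))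
 + (xᵢ-x_{i+1})⁻¹ (f̃(x₀,…,xᵢ,x_{i+2},…,x_{d+1}) - f̃(x₀,…,x_{i-1},x_{i+1},…,x_{d+1}))`. -/
theorem ft_one_translation (p : ℕ) [Fact p.Prime]
    (x0 y : RatFunc (ZMod p)) (as bs : List (RatFunc (ZMod p))) (hbs : bs ≠ [])
    (hnc : ∀ z ∈ x0 :: as ++ [y] ++ bs, ∀ c : ZMod p, z ≠ RatFunc.C c)
    (hy1 : ∀ c : ZMod p, y - 1 ≠ RatFunc.C c)
    (hprev : y - (x0 :: as).getLastD 0 ≠ 1)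
    (hnext : y ≠ bs.headD 0) :
    ft p (x0 :: as ++ [y - 1] ++ bs) - ft p (x0 :: as ++ [y] ++ bs)
      = (y - (x0 :: as).getLastD 0 - 1)⁻¹ *
          (ft p (x0 :: as ++ bs) - ft p ((x0 :: as).dropLast ++ [y - 1] ++ bs))
        + (y - bs.headD 0)⁻¹ *
          (ft p (x0 :: as ++ [y] ++ bs.tail) - ft p (x0 :: as ++ bs)) := by
  obtain ⟨w, zs, rfl⟩ := List.exists_cons_of_ne_nil hbs
  obtain ⟨xs, u, hxs⟩ : ∃ xs u, x0 :: as = xs ++ [u] :=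
    ⟨_, _, (List.dropLast_append_getLast (List.cons_ne_nil x0 as)).symm⟩
  rw [hxs] at hnc hprev ⊢
  rw [List.getLastD_concat] at hprev ⊢
  rw [List.headD_cons] at hnext ⊢
  rw [List.dropLast_concat, List.tail_cons]
  have hnat : ∀ z ∈ xs ++ [u] ++ [y] ++ w :: zs, ∀ n : ℕ, (n : RatFunc (ZMod p)) ≠ z :=
    fun z hz => natCast_ne_of_forall_ne_C (hnc z hz)
  simp only [List.append_assoc, List.cons_append, List.nil_append]
  simp (disch := simp +arith) only [ft_eq_closedChainSum]
  exact closedChainSum_sub_one_sub xs zs u y w 0 p (hnat u (by simp)) (hnat y (by simp))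
    (natCast_ne_of_forall_ne_C hy1) (hnat w (by simp)) hprev hnext
end

section
/- Let p be a prime, d ≥ 1, and k_1,…,k_d positive integers. Then in F_p one has ∑_{j=0}^{d} (−1)^j · H_p^⋆(k_1,…,k_j) · H_p(k_d,…,k_{j+1}) = 0, where the j = 0 term is H_p(k_d,…,k_1) and the j = d term is (−1)^d H_p^⋆(k_1,…,k_d). -/
/-- The multiple harmonic sum `H_p(k₁, …, k_d) = ∑_{0 < n₁ < ⋯ < n_d < p} n₁^{-k₁} ⋯ n_d^{-k_d}`
in `𝔽_p = ℤ/pℤ`, for a list `[k₁, …, k_d]` of exponents; equal to `1` when the list is empty. -/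
def H (p : ℕ) (ks : List ℕ) : ZMod p :=
  ∑ n ∈ Finset.univ.filter
      (fun n : Fin ks.length → Fin p =>
        (∀ i j : Fin ks.length, i < j → n i < n j) ∧ ∀ i, (n i : ℕ) ≠ 0),
    ∏ i, (((n i : ℕ) : ZMod p) ^ ks.get i)⁻¹

/-- The multiple harmonic star sum
`H_p^⋆(k₁, …, k_d) = ∑_{0 < n₁ ≤ ⋯ ≤ n_d < p} n₁^{-k₁} ⋯ n_d^{-k_d}` in `𝔽_p = ℤ/pℤ`,
for a list `[k₁, …, k_d]` of exponents; equal to `1` when the list is empty. -/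
def Hstar (p : ℕ) (ks : List ℕ) : ZMod p :=
  ∑ n ∈ Finset.univ.filter
      (fun n : Fin ks.length → Fin p =>
        (∀ i j : Fin ks.length, i ≤ j → n i ≤ n j) ∧ ∀ i, (n i : ℕ) ≠ 0),
    ∏ i, (((n i : ℕ) : ZMod p) ^ ks.get i)⁻¹

def Apred (p d j : ℕ) (n : Fin d → Fin p) : Prop :=
  (∀ a b : Fin d, a < b → (b : ℕ) < j → n a ≤ n b) ∧
  (∀ a b : Fin d, a < b → j ≤ (a : ℕ) → n b < n a) ∧
  (∀ i, (n i : ℕ) ≠ 0)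

instance (p d j : ℕ) : DecidablePred (Apred p d j) := fun _ => by
  unfold Apred; infer_instance

def AS (p : ℕ) (ks : List ℕ) (j : ℕ) : ZMod p :=
  ∑ n ∈ Finset.univ.filter (Apred p ks.length j),
    ∏ i, (((n i : ℕ) : ZMod p) ^ ks.get i)⁻¹


def Wpred (p d j : ℕ) (n : Fin d → Fin p) : Prop :=
  Apred p d j n ∧ ∀ a b : Fin d, (a : ℕ) + 1 = j → (b : ℕ) = j → n b < n a

instance (p d j : ℕ) : DecidablePred (Wpred p d j) := fun _ => by
  unfold Wpred; infer_instance

def WS (p : ℕ) (ks : List ℕ) (j : ℕ) : ZMod p :=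
  ∑ n ∈ Finset.univ.filter (Wpred p ks.length j),
    ∏ i, (((n i : ℕ) : ZMod p) ^ ks.get i)⁻¹
def glue (p d j tA tB : ℕ) (hA : tA = j) (hB : tB = d - j)
    (q : (Fin tA → Fin p) × (Fin tB → Fin p)) (i : Fin d) : Fin p :=
  if h : (i : ℕ) < j then q.1 ⟨(i : ℕ), by omega⟩
  else q.2 ⟨d - 1 - (i : ℕ), by have := i.isLt; omega⟩

def unglue (p d j tA tB : ℕ) (hA : tA = j) (hB : tB = d - j) (hj : j ≤ d)
    (n : Fin d → Fin p) : (Fin tA → Fin p) × (Fin tB → Fin p) :=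
  (fun i => n ⟨(i : ℕ), by have := i.isLt; omega⟩,
   fun i => n ⟨d - 1 - (i : ℕ), by have := i.isLt; omega⟩)

lemma Wsucc_imp_A {p d j : ℕ} {n : Fin d → Fin p} (h : Wpred p d (j + 1) n) :
    Apred p d j n := by
  obtain ⟨⟨hw, hs, hnz⟩, hlink⟩ := h
  refine ⟨fun a b hab hb => hw a b hab (by omega), ?_, hnz⟩
  intro a b hab ha
  by_cases haj : j + 1 ≤ (a : ℕ)
  · exact hs a b hab haj
  · have ha' : (a : ℕ) = j := by omega
    have hbv : j < (b : ℕ) := by have := Fin.lt_def.mp hab; omega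
    by_cases hb1 : (b : ℕ) = j + 1
    · exact hlink a b (by omega) hb1
    · have hj1d : j + 1 < d := by have := b.isLt; omega
      calc n b < n ⟨j + 1, hj1d⟩ := hs ⟨j + 1, hj1d⟩ b
                  (Fin.lt_def.mpr (show j + 1 < (b : ℕ) by omega)) le_rfl
        _ < n a := hlink a ⟨j + 1, hj1d⟩ (by omega) rfl

lemma pred_zero {p d : ℕ} (n : Fin d → Fin p) : Apred p d 0 n ↔ Wpred p d 1 n := by
  constructor
  · rintro ⟨hw, hs, hnz⟩
    refine ⟨⟨?_, ?_, hnz⟩, ?_⟩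
    · intro a b hab hb
      have := Fin.lt_def.mp hab; omega
    · intro a b hab _
      exact hs a b hab (Nat.zero_le _)
    · intro a b ha hb
      exact hs a b (Fin.lt_def.mpr (by omega)) (Nat.zero_le _)
  · exact Wsucc_imp_A

lemma pred_last {p d : ℕ} (n : Fin d → Fin p) : Apred p d d n ↔ Wpred p d d n := by
  constructor
  · intro h
    exact ⟨h, fun a b ha hb => absurd b.isLt (by omega)⟩
  · exact And.left

lemma pred_split {p d j : ℕ} (h1 : 1 ≤ j) (h2 : j < d) (n : Fin d → Fin p) :
    Apred p d j n ↔ (Wpred p d j n ∨ Wpred p d (j + 1) n) := by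
  constructor
  · rintro ⟨hw, hs, hnz⟩
    have hjm : j - 1 < d := by omega
    by_cases hc : n ⟨j, h2⟩ < n ⟨j - 1, hjm⟩
    · left
      refine ⟨⟨hw, hs, hnz⟩, ?_⟩
      intro a b ha hb
      have ha' : a = ⟨j - 1, hjm⟩ := Fin.ext (show (a : ℕ) = j - 1 by omega)
      have hb' : b = ⟨j, h2⟩ := Fin.ext hb
      rw [ha', hb']; exact hc
    · right
      push_neg at hc
      refine ⟨⟨?_, ?_, hnz⟩, ?_⟩
      · intro a b hab hb
        rcases Nat.lt_or_ge (b : ℕ) j with h | h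
        · exact hw a b hab h
        · have hb' : b = ⟨j, h2⟩ := Fin.ext (show (b : ℕ) = j by omega)
          have hav := Fin.lt_def.mp hab
          rcases Nat.lt_or_ge (a : ℕ) (j - 1) with h' | h'
          · rw [hb']
            calc n a ≤ n ⟨j - 1, hjm⟩ := hw a ⟨j - 1, hjm⟩
                        (Fin.lt_def.mpr (show (a : ℕ) < j - 1 from h'))
                        (show j - 1 < j by omega)
              _ ≤ n ⟨j, h2⟩ := hc
          · have ha' : a = ⟨j - 1, hjm⟩ := by
              rw [hb'] at hab
              have hav2 : (a : ℕ) < j := Fin.lt_def.mp hab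
              exact Fin.ext (show (a : ℕ) = j - 1 by omega)
            rw [ha', hb']; exact hc
      · intro a b hab ha
        exact hs a b hab (by omega)
      · intro a b ha hb
        have ha' : a = ⟨j, h2⟩ := Fin.ext (show (a : ℕ) = j by omega)
        rw [ha']
        exact hs ⟨j, h2⟩ b (Fin.lt_def.mpr (show j < (b : ℕ) by omega)) le_rfl
  · rintro (h | h)
    · exact h.1
    · exact Wsucc_imp_A h

lemma pred_disj {p d j : ℕ} (h1 : 1 ≤ j) (h2 : j < d) (n : Fin d → Fin p) :
    ¬ (Wpred p d j n ∧ Wpred p d (j + 1) n) := by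
  rintro ⟨⟨_, hlink⟩, ⟨hw, _, _⟩, _⟩
  have hjm : j - 1 < d := by omega
  have h1' : n ⟨j, h2⟩ < n ⟨j - 1, hjm⟩ :=
    hlink ⟨j - 1, hjm⟩ ⟨j, h2⟩ (show j - 1 + 1 = j by omega) rfl
  have h2' : n ⟨j - 1, hjm⟩ ≤ n ⟨j, h2⟩ :=
    hw ⟨j - 1, hjm⟩ ⟨j, h2⟩ (Fin.lt_def.mpr (show j - 1 < j by omega)) (show j < j + 1 by omega)
  exact absurd h2' (not_le.mpr h1')

lemma key (p : ℕ) (ks : List ℕ) (j : ℕ) (hj : j ≤ ks.length) :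
    Hstar p (ks.take j) * H p ((ks.drop j).reverse) = AS p ks j := by
  classical
  have htA : (ks.take j).length = j := by rw [List.length_take]; omega
  have htB : ((ks.drop j).reverse).length = ks.length - j := by
    rw [List.length_reverse, List.length_drop]
  unfold Hstar H AS
  rw [Finset.sum_mul_sum, ← Finset.sum_product']
  refine Finset.sum_nbij' (glue p ks.length j _ _ htA htB)
    (unglue p ks.length j _ _ htA htB hj) ?_ ?_ ?_ ?_ ?_
  · rintro ⟨a, b⟩ hq
    rw [Finset.mem_product] at hq
    obtain ⟨ha, hb⟩ := hq
    rw [Finset.mem_filter] at ha hb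
    obtain ⟨-, haw, hanz⟩ := ha
    obtain ⟨-, hbs, hbnz⟩ := hb
    rw [Finset.mem_filter]
    refine ⟨Finset.mem_univ _, ?_, ?_, ?_⟩
    · intro x y hxy hy
      have hxv := Fin.lt_def.mp hxy
      have hx : (x : ℕ) < j := by omega
      simp only [glue]
      rw [dif_pos hx, dif_pos hy]
      exact haw _ _ (Fin.mk_le_mk.mpr (by omega))
    · intro x y hxy hx
      have hxv := Fin.lt_def.mp hxy
      have hxj : ¬ (x : ℕ) < j := by omega
      have hyj : ¬ (y : ℕ) < j := by omega
      simp only [glue]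
      rw [dif_neg hxj, dif_neg hyj]
      exact hbs _ _ (Fin.mk_lt_mk.mpr (by have := y.isLt; omega))
    · intro i
      simp only [glue]
      by_cases hij : (i : ℕ) < j
      · rw [dif_pos hij]; exact hanz _
      · rw [dif_neg hij]; exact hbnz _
  · intro n hn
    rw [Finset.mem_filter] at hn
    obtain ⟨-, hw, hs, hnz⟩ := hn
    rw [Finset.mem_product]
    constructor
    · rw [Finset.mem_filter]
      refine ⟨Finset.mem_univ _, ?_, fun i => hnz _⟩
      intro x y hxy
      simp only [unglue]
      rcases eq_or_lt_of_le hxy with heq | hlt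
      · rw [heq]
      · exact hw _ _ (Fin.mk_lt_mk.mpr (Fin.lt_def.mp hlt))
          (show (y : ℕ) < j from by have := y.isLt; omega)
    · rw [Finset.mem_filter]
      refine ⟨Finset.mem_univ _, ?_, fun i => hnz _⟩
      intro x y hxy
      simp only [unglue]
      exact hs _ _
        (Fin.mk_lt_mk.mpr (by have := Fin.lt_def.mp hxy; have := y.isLt; omega))
        (show j ≤ ks.length - 1 - (y : ℕ) from by have := y.isLt; omega)
  · rintro ⟨a, b⟩ -
    refine Prod.ext ?_ ?_
    · funext i
      simp only [glue, unglue]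
      rw [dif_pos (show (i : ℕ) < j from by have := i.isLt; omega)]
    · funext i
      simp only [glue, unglue]
      rw [dif_neg (show ¬ (ks.length - 1 - (i : ℕ) < j) from by have := i.isLt; omega)]
      exact congrArg b (Fin.ext (show ks.length - 1 - (ks.length - 1 - (i : ℕ)) = (i : ℕ)
        from by have := i.isLt; omega))
  · rintro n -
    funext i
    simp only [glue, unglue]
    by_cases hij : (i : ℕ) < j
    · rw [dif_pos hij]
    · rw [dif_neg hij]
      exact congrArg n (Fin.ext (show ks.length - 1 - (ks.length - 1 - (i : ℕ)) = (i : ℕ)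
        from by have := i.isLt; omega))
  · rintro ⟨a, b⟩ -
    rw [← Finset.prod_filter_mul_prod_filter_not Finset.univ (fun i : Fin ks.length => (i : ℕ) < j)]
    congr 1
    · refine Finset.prod_bij'
        (fun (x : Fin (ks.take j).length) _ => (⟨(x : ℕ), by have := x.isLt; omega⟩ : Fin ks.length))
        (fun (x : Fin ks.length) hx =>
          (⟨(x : ℕ), by have := (Finset.mem_filter.mp hx).2; omega⟩ : Fin (ks.take j).length))
        ?_ ?_ ?_ ?_ ?_
      · intro x _
        simp only [Finset.mem_filter, Finset.mem_univ, true_and]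
        have := x.isLt; omega
      · intro x hx
        exact Finset.mem_univ _
      · intro x _
        exact Fin.ext rfl
      · intro x _
        exact Fin.ext rfl
      · intro x _
        have hxj : (x : ℕ) < j := by have := x.isLt; omega
        simp only [glue]
        rw [dif_pos hxj]
        simp only [List.get_eq_getElem, List.getElem_take, Fin.eta]
    · refine Finset.prod_bij'
        (fun (x : Fin ((ks.drop j).reverse).length) _ =>
          (⟨ks.length - 1 - (x : ℕ), by have := x.isLt; omega⟩ : Fin ks.length))
        (fun (x : Fin ks.length) hx =>
          (⟨ks.length - 1 - (x : ℕ), by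
            have := (Finset.mem_filter.mp hx).2
            have := x.isLt; omega⟩ : Fin ((ks.drop j).reverse).length))
        ?_ ?_ ?_ ?_ ?_
      · intro x _
        simp only [Finset.mem_filter, Finset.mem_univ, true_and]
        have := x.isLt; omega
      · intro x hx
        exact Finset.mem_univ _
      · intro x _
        exact Fin.ext (show ks.length - 1 - (ks.length - 1 - (x : ℕ)) = (x : ℕ)
          from by have := x.isLt; omega)
      · intro x hx
        have := (Finset.mem_filter.mp hx).2
        exact Fin.ext (show ks.length - 1 - (ks.length - 1 - (x : ℕ)) = (x : ℕ)
          from by have := x.isLt; omega)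
      · intro x _
        have hxj : ¬ (ks.length - 1 - (x : ℕ) < j) := by have := x.isLt; omega
        have hidx : ks.length - 1 - (ks.length - 1 - (x : ℕ)) = (x : ℕ) := by
          have := x.isLt; omega
        simp only [glue]
        rw [dif_neg hxj]
        simp only [hidx, Fin.eta, List.get_eq_getElem, List.getElem_reverse, List.getElem_drop,
          List.length_drop]
        have hidx3 : j + (ks.length - j - 1 - (x : ℕ)) = ks.length - 1 - (x : ℕ) := by
          have := x.isLt; omega
        simp only [hidx3]

lemma AS_zero (p : ℕ) (ks : List ℕ) : AS p ks 0 = WS p ks 1 := by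
  unfold AS WS
  congr 1
  ext n
  simp only [Finset.mem_filter, Finset.mem_univ, true_and]
  exact pred_zero n

lemma AS_last (p : ℕ) (ks : List ℕ) : AS p ks ks.length = WS p ks ks.length := by
  unfold AS WS
  congr 1
  ext n
  simp only [Finset.mem_filter, Finset.mem_univ, true_and]
  exact pred_last n

lemma AS_split (p : ℕ) (ks : List ℕ) (j : ℕ) (h1 : 1 ≤ j) (h2 : j < ks.length) :
    AS p ks j = WS p ks j + WS p ks (j + 1) := by
  unfold AS WS
  have hset : Finset.univ.filter (Apred p ks.length j)
      = Finset.univ.filter (Wpred p ks.length j)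
        ∪ Finset.univ.filter (Wpred p ks.length (j + 1)) := by
    ext n
    simp only [Finset.mem_filter, Finset.mem_union, Finset.mem_univ, true_and]
    exact pred_split h1 h2 n
  rw [hset, Finset.sum_union]
  rw [Finset.disjoint_left]
  intro n hn1 hn2
  rw [Finset.mem_filter] at hn1 hn2
  exact pred_disj h1 h2 n ⟨hn1.2, hn2.2⟩

/-- Antipode relation: for a prime `p`, `d ≥ 1` and positive integers `k₁, …, k_d`,
`∑_{j=0}^{d} (-1)^j H_p^⋆(k₁,…,k_j) H_p(k_d,…,k_{j+1}) = 0` in `𝔽_p`. -/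
theorem antipode_relation (p : ℕ) (hp : p.Prime) (ks : List ℕ)
    (hne : 1 ≤ ks.length) (hpos : ∀ k ∈ ks, 1 ≤ k) :
    ∑ j ∈ Finset.range (ks.length + 1),
      (-1 : ZMod p) ^ j * Hstar p (ks.take j) * H p ((ks.drop j).reverse) = 0 := by
  have hpow : ∀ m : ℕ, 1 ≤ m → (-1 : ZMod p) ^ m = -(-1 : ZMod p) ^ (m - 1) := by
    intro m hm
    conv_lhs => rw [show m = (m - 1) + 1 by omega]
    rw [pow_succ]; ring
  have hAS : ∑ j ∈ Finset.range (ks.length + 1),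
      (-1 : ZMod p) ^ j * Hstar p (ks.take j) * H p ((ks.drop j).reverse)
        = ∑ j ∈ Finset.range (ks.length + 1), (-1 : ZMod p) ^ j * AS p ks j := by
    refine Finset.sum_congr rfl fun j hj => ?_
    rw [mul_assoc, key p ks j (by have := Finset.mem_range.mp hj; omega)]
  rw [hAS]
  have hpartial : ∀ m, 1 ≤ m → m ≤ ks.length →
      ∑ j ∈ Finset.range m, (-1 : ZMod p) ^ j * AS p ks j
        = (-1 : ZMod p) ^ (m - 1) * WS p ks m := by
    intro m
    induction m with
    | zero => intro h; omega
    | succ m ih =>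
      intro _ hmd
      by_cases hm : m = 0
      · subst hm
        rw [Finset.sum_range_one, AS_zero]
      · have h1 : 1 ≤ m := Nat.one_le_iff_ne_zero.mpr hm
        rw [Finset.sum_range_succ, ih h1 (by omega), AS_split p ks m h1 (by omega),
          Nat.add_sub_cancel, hpow m h1]
        ring
  rw [Finset.sum_range_succ, hpartial ks.length hne le_rfl, AS_last, hpow ks.length hne]
  ring
end
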